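/- Let λ < 0 and let f : ℝ → ℝ be twice differentiable on (0,∞). Then f''(u) + f'(u)/u + λ f(u) = 0 for all u > 0 if and only if there exist constants c₁, c₂ ∈ ℝ such that f(u) = c₁ I₀(√(−λ) u) + c₂ K₀(√(−λ) u) for all u > 0. -/

import Mathlib

/-- The Bessel function of the first kind of order zero,
`J₀(x) = ∑ (−1)ⁿ x²ⁿ / (2²ⁿ (n!)²)`. -/
noncomputable def besselJ0 (x : ℝ) : ℝ :=
  ∑' n : ℕ, (-1 : ℝ) ^ n * x ^ (2 * n) / (2 ^ (2 * n) * ((n.factorial : ℝ)) ^ 2)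

/-- `φ(n) = ∑_{m=1}^n 1/m`, with `φ(0) = 0`. -/
noncomputable def harmonicPhi (n : ℕ) : ℝ :=
  ∑ m ∈ Finset.range n, (1 : ℝ) / (m + 1)

/-- Weber's Bessel function of order zero,
`Y₀(x) = (2/π)[(ln(x/2) + γ) J₀(x) − ∑ (−1)ⁿ φ(n) x²ⁿ / (2²ⁿ (n!)²)]`. -/
noncomputable def besselY0 (x : ℝ) : ℝ :=
  (2 / Real.pi) *
    ((Real.log (x / 2) + Real.eulerMascheroniConstant) * besselJ0 x -
      ∑' n : ℕ, (-1 : ℝ) ^ n * harmonicPhi n * x ^ (2 * n) /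
        (2 ^ (2 * n) * ((n.factorial : ℝ)) ^ 2))

/-- The modified Bessel function of the first kind of order zero,
`I₀(x) = ∑ x²ⁿ / (2²ⁿ (n!)²)`. -/
noncomputable def besselI0 (x : ℝ) : ℝ :=
  ∑' n : ℕ, x ^ (2 * n) / (2 ^ (2 * n) * ((n.factorial : ℝ)) ^ 2)

/-- The modified Bessel function of the second kind of order zero,
`K₀(x) = −(ln(x/2) + γ) I₀(x) + ∑ φ(n) x²ⁿ / (2²ⁿ (n!)²)`. -/
noncomputable def besselK0 (x : ℝ) : ℝ :=
  -(Real.log (x / 2) + Real.eulerMascheroniConstant) * besselI0 x +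
    ∑' n : ℕ, harmonicPhi n * x ^ (2 * n) / (2 ^ (2 * n) * ((n.factorial : ℝ)) ^ 2)

/-!
For `λ = -k²` the substitution `x = k u` reduces the equation to `g'' + g'/x - g = 0`. On an even
power series `∑ aₙ x²ⁿ` the operator `g ↦ g'' + g'/x` acts by `x²ⁿ⁺² ↦ 4(n+1)² x²ⁿ`, so the
recursion `aₙ = 4(n+1)² aₙ₊₁` for the coefficients of `I₀` makes `I₀` a solution; for `K₀` the
logarithm contributes `-2 I₀'/x`, which the harmonic numbers in the series part compensate.

By Abel's identity `x W(I₀, K₀)(x)` is constant on `(0, ∞)`. The logarithms cancel in it, leaving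
`-I₀(x)² + x W(I₀, S)(x)` with `S` the series part of `K₀`, a function continuous at `0` with value
`-1` there. So the two solutions are independent, and since on `(0, ∞)` the equation is a linear
ODE with regular coefficients, every solution is fixed by its value and derivative at one point,
hence is a combination of them.
-/

open Set Filter Topology Metric

noncomputable section

def evenSeries (a : ℕ → ℝ) (x : ℝ) : ℝ := ∑' n, a n * x ^ (2 * n)

def EntireCoeffs (a : ℕ → ℝ) : Prop := ∀ r : ℝ, 0 < r → Summable fun n => |a n| * r ^ n

def evenDerivCoeff (a : ℕ → ℝ) (n : ℕ) : ℝ := 2 * (n + 1) * a (n + 1)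

namespace EntireCoeffs

variable {a b : ℕ → ℝ}

theorem of_abs_le (hb : EntireCoeffs b) (h : ∀ n, |a n| ≤ |b n|) : EntireCoeffs a := fun r hr =>
  (hb r hr).of_nonneg_of_le (fun _ => by positivity) fun n =>
    mul_le_mul_of_nonneg_right (h n) (by positivity)

theorem const_mul (ha : EntireCoeffs a) (c : ℝ) : EntireCoeffs fun n => c * a n := fun r hr => by
  simpa [abs_mul, mul_assoc] using (ha r hr).mul_left |c|

theorem natCast_mul (ha : EntireCoeffs a) : EntireCoeffs fun n => (n : ℝ) * a n := fun r hr =>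
  (ha (2 * r) (by positivity)).of_nonneg_of_le (fun _ => by positivity) fun n => by
    have hn : (n : ℝ) ≤ 2 ^ n := by exact_mod_cast Nat.lt_two_pow_self.le
    rw [abs_mul, Nat.abs_cast, mul_pow]
    calc (n : ℝ) * |a n| * r ^ n ≤ 2 ^ n * |a n| * r ^ n := by gcongr
      _ = |a n| * (2 ^ n * r ^ n) := by ring

theorem shift (ha : EntireCoeffs a) : EntireCoeffs fun n => a (n + 1) := fun r hr =>
  (((summable_nat_add_iff 1).mpr (ha r hr)).mul_left r⁻¹).congr fun n => by
    rw [pow_succ]; field_simp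

theorem evenDerivCoeff (ha : EntireCoeffs a) : EntireCoeffs (evenDerivCoeff a) := by
  convert (ha.natCast_mul.shift).const_mul 2 using 2 with n
  simp only [_root_.evenDerivCoeff]; push_cast; ring

theorem summable (ha : EntireCoeffs a) (x : ℝ) : Summable fun n => a n * x ^ (2 * n) :=
  .of_norm_bounded (ha (x ^ 2 + 1) (by positivity)) fun n => by
    rw [Real.norm_eq_abs, abs_mul, pow_mul, abs_pow, abs_of_nonneg (sq_nonneg x)]
    gcongr
    linarith

end EntireCoeffs

variable {a b : ℕ → ℝ}

theorem evenSeries_zero (a : ℕ → ℝ) : evenSeries a 0 = a 0 := by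
  rw [evenSeries, tsum_eq_single 0 fun n hn => by simp [hn]]
  simp

theorem evenSeries_const_mul (a : ℕ → ℝ) (c x : ℝ) :
    evenSeries (fun n => c * a n) x = c * evenSeries a x := by
  simp only [evenSeries, mul_assoc, tsum_mul_left]

theorem evenSeries_add (ha : EntireCoeffs a) (hb : EntireCoeffs b) (x : ℝ) :
    evenSeries (fun n => a n + b n) x = evenSeries a x + evenSeries b x := by
  simp only [evenSeries, add_mul]
  exact (ha.summable x).tsum_add (hb.summable x)

theorem hasDerivAt_evenSeries (ha : EntireCoeffs a) (x : ℝ) :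
    HasDerivAt (evenSeries a) (x * evenSeries (evenDerivCoeff a) x) x := by
  set R := |x| + 1
  have hx : x ∈ ball (0 : ℝ) R := by simp [R]
  have hterm : ∀ n, ∀ y ∈ ball (0 : ℝ) R, HasDerivAt (fun z => a (n + 1) * z ^ (2 * (n + 1)))
      (evenDerivCoeff a n * y ^ (2 * n) * y) y := fun n y _ => by
    refine ((hasDerivAt_pow (2 * (n + 1)) y).const_mul (a (n + 1))).congr_deriv ?_
    rw [show 2 * (n + 1) - 1 = 2 * n + 1 by omega, evenDerivCoeff, pow_succ]
    push_cast; ring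
  have hbound : ∀ n, ∀ y ∈ ball (0 : ℝ) R,
      ‖evenDerivCoeff a n * y ^ (2 * n) * y‖ ≤ |evenDerivCoeff a n| * (R ^ 2) ^ n * R := by
    intro n y hy
    have hyR : |y| ≤ R := (mem_ball_zero_iff.mp hy).le
    rw [Real.norm_eq_abs, abs_mul, abs_mul, abs_pow, ← pow_mul]
    gcongr
  have hshift : evenSeries a = fun z => a 0 + ∑' n, a (n + 1) * z ^ (2 * (n + 1)) :=
    funext fun z => by rw [evenSeries, (ha.summable z).tsum_eq_zero_add]; simp
  have hsum := hasDerivAt_tsum_of_isPreconnected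
    ((ha.evenDerivCoeff (R ^ 2) (by positivity)).mul_right R) isOpen_ball
    (convex_ball _ _).isPreconnected hterm hbound hx
    ((summable_nat_add_iff 1).mpr (ha.summable x)) hx
  rw [tsum_mul_right] at hsum
  rw [hshift, mul_comm]
  exact hsum.const_add (a 0)

theorem deriv_evenSeries (ha : EntireCoeffs a) :
    deriv (evenSeries a) = fun x => x * evenSeries (evenDerivCoeff a) x :=
  funext fun x => (hasDerivAt_evenSeries ha x).deriv

theorem differentiable_evenSeries (ha : EntireCoeffs a) : Differentiable ℝ (evenSeries a) :=
  fun x => (hasDerivAt_evenSeries ha x).differentiableAt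

theorem hasDerivAt_deriv_evenSeries (ha : EntireCoeffs a) (x : ℝ) :
    HasDerivAt (deriv (evenSeries a)) (evenSeries (evenDerivCoeff a) x +
      x * (x * evenSeries (evenDerivCoeff (evenDerivCoeff a)) x)) x := by
  rw [deriv_evenSeries ha]
  exact (hasDerivAt_id' x).mul (hasDerivAt_evenSeries ha.evenDerivCoeff x) |>.congr_deriv (by simp)

theorem differentiable_deriv_evenSeries (ha : EntireCoeffs a) :
    Differentiable ℝ (deriv (evenSeries a)) :=
  fun x => (hasDerivAt_deriv_evenSeries ha x).differentiableAt

theorem sq_mul_evenSeries_evenDerivCoeff (ha : EntireCoeffs a) (x : ℝ) :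
    x ^ 2 * evenSeries (evenDerivCoeff a) x = evenSeries (fun n => 2 * (n * a n)) x := by
  rw [evenSeries, evenSeries, ((ha.natCast_mul.const_mul 2).summable x).tsum_eq_zero_add,
    ← tsum_mul_left]
  simp only [CharP.cast_eq_zero, zero_mul, mul_zero, zero_add]
  congr 1 with n
  simp only [evenDerivCoeff]
  push_cast
  ring

theorem deriv_deriv_evenSeries_add_div (ha : EntireCoeffs a) {x : ℝ} (hx : x ≠ 0) :
    deriv (deriv (evenSeries a)) x + deriv (evenSeries a) x / x =
      evenSeries (fun n => 4 * (n + 1) ^ 2 * a (n + 1)) x := by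
  have hb := ha.evenDerivCoeff
  rw [(hasDerivAt_deriv_evenSeries ha x).deriv, deriv_evenSeries ha, mul_div_cancel_left₀ _ hx]
  calc _ = 2 * evenSeries (evenDerivCoeff a) x +
        x ^ 2 * evenSeries (evenDerivCoeff (evenDerivCoeff a)) x := by ring
    _ = evenSeries (fun n => 2 * evenDerivCoeff a n + 2 * (n * evenDerivCoeff a n)) x := by
      rw [sq_mul_evenSeries_evenDerivCoeff hb, ← evenSeries_const_mul,
        evenSeries_add (hb.const_mul 2) (hb.natCast_mul.const_mul 2)]
    _ = _ := by
      congr 1 with n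
      simp only [evenDerivCoeff]
      ring

def besselI0Coeff (n : ℕ) : ℝ := ((2 : ℝ) ^ (2 * n) * (n.factorial : ℝ) ^ 2)⁻¹

def besselK0Series : ℝ → ℝ := evenSeries fun n => harmonicPhi n * besselI0Coeff n

theorem besselI0Coeff_zero : besselI0Coeff 0 = 1 := by simp [besselI0Coeff]

theorem besselI0Coeff_eq_mul_succ (n : ℕ) :
    besselI0Coeff n = 4 * (n + 1) ^ 2 * besselI0Coeff (n + 1) := by
  simp only [besselI0Coeff, Nat.factorial_succ, Nat.cast_mul, mul_add, pow_add]
  push_cast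
  field_simp
  ring

theorem harmonicPhi_succ (n : ℕ) : harmonicPhi (n + 1) = harmonicPhi n + 1 / (n + 1) :=
  Finset.sum_range_succ _ n

theorem harmonicPhi_nonneg (n : ℕ) : 0 ≤ harmonicPhi n :=
  Finset.sum_nonneg fun _ _ => by positivity

theorem harmonicPhi_le (n : ℕ) : harmonicPhi n ≤ n := by
  calc harmonicPhi n ≤ ∑ _m ∈ Finset.range n, (1 : ℝ) :=
        Finset.sum_le_sum fun m _ => div_le_one_of_le₀ (by linarith [m.cast_nonneg (α := ℝ)])
          (by positivity)
    _ = n := by simp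

theorem entireCoeffs_inv_factorial : EntireCoeffs fun n => (n.factorial : ℝ)⁻¹ := fun r _ =>
  (Real.summable_pow_div_factorial r).congr fun n => by
    rw [abs_of_pos (by positivity)]; ring

theorem entireCoeffs_besselI0Coeff : EntireCoeffs besselI0Coeff :=
  entireCoeffs_inv_factorial.of_abs_le fun n => by
    have h1 : (1 : ℝ) ≤ n.factorial := by exact_mod_cast n.factorial_pos
    rw [abs_of_pos (by simp only [besselI0Coeff]; positivity), abs_of_pos (by positivity),
      besselI0Coeff]
    gcongr
    calc (n.factorial : ℝ) = 1 * (1 * n.factorial) := by ring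
      _ ≤ 2 ^ (2 * n) * (n.factorial * n.factorial) := by
          gcongr; exact one_le_pow₀ (by norm_num : (1 : ℝ) ≤ 2)
      _ = _ := by ring

theorem entireCoeffs_harmonicPhi_mul_besselI0Coeff :
    EntireCoeffs fun n => harmonicPhi n * besselI0Coeff n :=
  entireCoeffs_inv_factorial.of_abs_le fun n => by
    have h1 : (1 : ℝ) ≤ n.factorial := by exact_mod_cast n.factorial_pos
    have hn : harmonicPhi n ≤ n.factorial :=
      (harmonicPhi_le n).trans (by exact_mod_cast n.self_le_factorial)
    rw [abs_of_nonneg (by simp only [besselI0Coeff]; have := harmonicPhi_nonneg n; positivity),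
      abs_of_pos (by positivity), besselI0Coeff]
    calc harmonicPhi n * (2 ^ (2 * n) * (n.factorial : ℝ) ^ 2)⁻¹
        ≤ n.factorial * (1 * (n.factorial : ℝ) ^ 2)⁻¹ := by
          gcongr
          exact one_le_pow₀ (by norm_num)
      _ = (n.factorial : ℝ)⁻¹ := by field_simp

theorem besselI0_eq_evenSeries : besselI0 = evenSeries besselI0Coeff :=
  funext fun x => tsum_congr fun n => by rw [besselI0Coeff, div_eq_inv_mul]

theorem besselK0_eq_neg_log_mul_besselI0_add : besselK0 = fun x =>
    -(Real.log (x / 2) + Real.eulerMascheroniConstant) * besselI0 x + besselK0Series x := by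
  funext x
  rw [besselK0, besselK0Series, evenSeries]
  congr 1
  exact tsum_congr fun n => by simp only [besselI0Coeff]; ring

theorem besselI0_zero : besselI0 0 = 1 := by
  rw [besselI0_eq_evenSeries, evenSeries_zero, besselI0Coeff_zero]

theorem deriv_deriv_besselI0_add_div {x : ℝ} (hx : x ≠ 0) :
    deriv (deriv besselI0) x + deriv besselI0 x / x = besselI0 x := by
  rw [besselI0_eq_evenSeries, deriv_deriv_evenSeries_add_div entireCoeffs_besselI0Coeff hx]
  simp only [← besselI0Coeff_eq_mul_succ]

theorem deriv_deriv_besselK0Series_add_div {x : ℝ} (hx : x ≠ 0) :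
    deriv (deriv besselK0Series) x + deriv besselK0Series x / x =
      besselK0Series x + 2 * (deriv besselI0 x / x) := by
  have hI := entireCoeffs_besselI0Coeff
  rw [besselK0Series, deriv_deriv_evenSeries_add_div entireCoeffs_harmonicPhi_mul_besselI0Coeff hx,
    besselI0_eq_evenSeries, deriv_evenSeries hI, mul_div_cancel_left₀ _ hx,
    ← evenSeries_const_mul, ← evenSeries_add entireCoeffs_harmonicPhi_mul_besselI0Coeff
      (hI.evenDerivCoeff.const_mul 2)]
  congr 1 with n
  rw [harmonicPhi_succ, besselI0Coeff_eq_mul_succ n, evenDerivCoeff]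
  field_simp
  ring

theorem differentiable_besselI0 : Differentiable ℝ besselI0 :=
  besselI0_eq_evenSeries ▸ differentiable_evenSeries entireCoeffs_besselI0Coeff

theorem differentiable_deriv_besselI0 : Differentiable ℝ (deriv besselI0) :=
  besselI0_eq_evenSeries ▸ differentiable_deriv_evenSeries entireCoeffs_besselI0Coeff

theorem differentiable_besselK0Series : Differentiable ℝ besselK0Series :=
  differentiable_evenSeries entireCoeffs_harmonicPhi_mul_besselI0Coeff

theorem differentiable_deriv_besselK0Series : Differentiable ℝ (deriv besselK0Series) :=
  differentiable_deriv_evenSeries entireCoeffs_harmonicPhi_mul_besselI0Coeff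

theorem hasDerivAt_log_div_two_add_eulerMascheroni {x : ℝ} (hx : x ≠ 0) :
    HasDerivAt (fun y => Real.log (y / 2) + Real.eulerMascheroniConstant) x⁻¹ x := by
  have h := (Real.hasDerivAt_log (div_ne_zero hx two_ne_zero)).comp x
    ((hasDerivAt_id x).div_const 2)
  exact (h.add_const _).congr_deriv (by field_simp)

theorem hasDerivAt_besselK0 {x : ℝ} (hx : x ≠ 0) :
    HasDerivAt besselK0 (-(besselI0 x / x) -
      (Real.log (x / 2) + Real.eulerMascheroniConstant) * deriv besselI0 x +
        deriv besselK0Series x) x := by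
  rw [besselK0_eq_neg_log_mul_besselI0_add]
  refine (((hasDerivAt_log_div_two_add_eulerMascheroni hx).neg.mul
    (differentiable_besselI0 x).hasDerivAt).add
      (differentiable_besselK0Series x).hasDerivAt).congr_deriv ?_
  simp only [Pi.neg_apply]
  field_simp
  ring

theorem hasDerivAt_deriv_besselK0 {x : ℝ} (hx : x ≠ 0) :
    HasDerivAt (deriv besselK0) (besselI0 x / x ^ 2 - 2 * (deriv besselI0 x / x) -
      (Real.log (x / 2) + Real.eulerMascheroniConstant) * deriv (deriv besselI0) x +
        deriv (deriv besselK0Series) x) x := by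
  have hev : deriv besselK0 =ᶠ[𝓝 x] fun y => -(besselI0 y / y) -
      (Real.log (y / 2) + Real.eulerMascheroniConstant) * deriv besselI0 y +
        deriv besselK0Series y :=
    eventuallyEq_of_mem (isOpen_ne.mem_nhds hx) fun y hy => (hasDerivAt_besselK0 hy).deriv
  refine ((((differentiable_besselI0 x).hasDerivAt.div (hasDerivAt_id x) hx).neg.sub
    ((hasDerivAt_log_div_two_add_eulerMascheroni hx).mul
      (differentiable_deriv_besselI0 x).hasDerivAt)).add
        (differentiable_deriv_besselK0Series x).hasDerivAt).congr_of_eventuallyEq hev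
    |>.congr_deriv ?_
  simp only [id]
  field_simp
  ring

def IsBesselSolution (lam : ℝ) (f : ℝ → ℝ) : Prop :=
  ∀ u ∈ Ioi (0 : ℝ), DifferentiableAt ℝ f u ∧ DifferentiableAt ℝ (deriv f) u ∧
    deriv (deriv f) u + deriv f u / u + lam * f u = 0

theorem isBesselSolution_besselI0 : IsBesselSolution (-1) besselI0 := fun x hx =>
  ⟨differentiable_besselI0 x, differentiable_deriv_besselI0 x, by
    rw [deriv_deriv_besselI0_add_div (ne_of_gt hx)]; ring⟩

theorem isBesselSolution_besselK0 : IsBesselSolution (-1) besselK0 := fun x hx => by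
  have hx0 : x ≠ 0 := ne_of_gt hx
  refine ⟨(hasDerivAt_besselK0 hx0).differentiableAt,
    (hasDerivAt_deriv_besselK0 hx0).differentiableAt, ?_⟩
  rw [(hasDerivAt_deriv_besselK0 hx0).deriv, (hasDerivAt_besselK0 hx0).deriv]
  simp only [besselK0_eq_neg_log_mul_besselI0_add]
  have hI := deriv_deriv_besselI0_add_div hx0
  have hS := deriv_deriv_besselK0Series_add_div hx0
  linear_combination (-(Real.log (x / 2) + Real.eulerMascheroniConstant)) * hI + hS

def wronskian (f g : ℝ → ℝ) (t : ℝ) : ℝ := f t * deriv g t - deriv f t * g t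

theorem wronskian_comp_mul (f g : ℝ → ℝ) (k t : ℝ) :
    wronskian (fun u => f (k * u)) (fun u => g (k * u)) t = k * wronskian f g (k * t) := by
  simp only [wronskian, deriv_comp_mul_left, smul_eq_mul]
  ring

theorem lipschitzWith_besselField (lam : ℝ) {a t : ℝ} (ha : 0 < a) (hat : a ≤ t) :
    LipschitzWith (1 + a⁻¹ + |lam|).toNNReal fun p : ℝ × ℝ => (p.2, -p.2 / t - lam * p.1) := by
  refine .of_dist_le_mul fun p q => ?_
  rw [Real.coe_toNNReal _ (by positivity), Prod.dist_eq, Prod.dist_eq]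
  simp only [Real.dist_eq]
  have h1 : |p.1 - q.1| ≤ max |p.1 - q.1| |p.2 - q.2| := le_max_left _ _
  have h2 : |p.2 - q.2| ≤ max |p.1 - q.1| |p.2 - q.2| := le_max_right _ _
  have ht : t⁻¹ ≤ a⁻¹ := inv_anti₀ ha hat
  have hsecond : |-p.2 / t - lam * p.1 - (-q.2 / t - lam * q.1)| ≤
      t⁻¹ * |p.2 - q.2| + |lam| * |p.1 - q.1| := by
    calc _ = |-(t⁻¹ * (p.2 - q.2)) + -(lam * (p.1 - q.1))| := by congr 1; ring
      _ ≤ _ := by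
        refine (abs_add_le _ _).trans_eq ?_
        rw [abs_neg, abs_neg, abs_mul, abs_mul, abs_of_pos (inv_pos.mpr (ha.trans_le hat))]
  refine max_le (h2.trans (le_mul_of_one_le_left ((abs_nonneg _).trans h2) ?_)) (hsecond.trans ?_)
  · linarith [abs_nonneg lam, inv_pos.mpr ha]
  · nlinarith [abs_nonneg lam, abs_nonneg (p.2 - q.2), inv_pos.mpr ha]

namespace IsBesselSolution

variable {lam : ℝ} {f g y : ℝ → ℝ}

theorem congr (hf : IsBesselSolution lam f) (h : EqOn f g (Ioi 0)) : IsBesselSolution lam g := by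
  intro u hu
  have h1 : f =ᶠ[𝓝 u] g := eventuallyEq_of_mem (Ioi_mem_nhds hu) h
  obtain ⟨hf1, hf2, hf3⟩ := hf u hu
  refine ⟨hf1.congr_of_eventuallyEq h1.symm, hf2.congr_of_eventuallyEq h1.deriv.symm, ?_⟩
  rwa [← h1.deriv.deriv_eq, ← h1.deriv_eq, ← h1.eq_of_nhds]

theorem const_mul_add_const_mul (hf : IsBesselSolution lam f) (hg : IsBesselSolution lam g)
    (a b : ℝ) :
    IsBesselSolution lam fun u => a * f u + b * g u := by
  intro u hu
  obtain ⟨hf1, hf2, hf3⟩ := hf u hu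
  obtain ⟨hg1, hg2, hg3⟩ := hg u hu
  have hD : deriv (fun t => a * f t + b * g t) =ᶠ[𝓝 u]
      fun t => a * deriv f t + b * deriv g t := by
    filter_upwards [Ioi_mem_nhds hu] with t ht
    exact (((hf t ht).1.hasDerivAt.const_mul a).add ((hg t ht).1.hasDerivAt.const_mul b)).deriv
  have hDD : HasDerivAt (deriv fun t => a * f t + b * g t)
      (a * deriv (deriv f) u + b * deriv (deriv g) u) u :=
    ((hf2.hasDerivAt.const_mul a).add (hg2.hasDerivAt.const_mul b)).congr_of_eventuallyEq hD
  refine ⟨(hf1.const_mul a).add (hg1.const_mul b), hDD.differentiableAt, ?_⟩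
  rw [hDD.deriv, hD.eq_of_nhds]
  linear_combination a * hf3 + b * hg3

theorem comp_mul (hf : IsBesselSolution lam f) {k : ℝ} (hk : 0 < k) :
    IsBesselSolution (k ^ 2 * lam) fun u => f (k * u) := by
  intro u (hu : 0 < u)
  obtain ⟨hf1, hf2, hf3⟩ := hf (k * u) (mul_pos hk hu)
  have hD : deriv (fun u => f (k * u)) = fun u => k * deriv f (k * u) :=
    funext fun u => deriv_comp_mul_left k f u
  have hmul : DifferentiableAt ℝ (fun u => k * u) u := differentiableAt_id.const_mul k
  refine ⟨hf1.comp u hmul, hD ▸ (hf2.comp u hmul).const_mul k, ?_⟩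
  rw [hD, deriv_const_mul_field, deriv_comp_mul_left, smul_eq_mul]
  have hscale : k ^ 2 * (deriv f (k * u) / (k * u)) = k * deriv f (k * u) / u := by
    field_simp [ne_of_gt hk, ne_of_gt hu]
  linear_combination k ^ 2 * hf3 - hscale

theorem eqOn_zero (hy : IsBesselSolution lam y) {t₀ : ℝ} (ht₀ : 0 < t₀) (h0 : y t₀ = 0)
    (h1 : deriv y t₀ = 0) : EqOn y 0 (Ioi 0) := by
  intro u (hu : 0 < u)
  set a := min u t₀ / 2
  set b := max u t₀ + 1
  have ha : 0 < a := by positivity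
  have hau : a < min u t₀ := half_lt_self (lt_min hu ht₀)
  have hbu : max u t₀ < b := by linarith
  have hpos : ∀ t ∈ Ioo a b, 0 < t := fun t ht => ha.trans ht.1
  have hY : ∀ t ∈ Ioo a b, HasDerivAt (fun t => (y t, deriv y t))
      (deriv y t, -deriv y t / t - lam * y t) t := by
    intro t ht
    obtain ⟨hy1, hy2, hy3⟩ := hy t (hpos t ht)
    have hyy : deriv (deriv y) t = -deriv y t / t - lam * y t := by linear_combination hy3
    exact hy1.hasDerivAt.prodMk (hyy ▸ hy2.hasDerivAt)
  have hcont : ContinuousOn (fun t => (y t, deriv y t)) (Icc a b) := fun t ht => by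
    obtain ⟨hy1, hy2, -⟩ := hy t (ha.trans_le ht.1)
    exact (hy1.continuousAt.prodMk hy2.continuousAt).continuousWithinAt
  have hsol := ODE_solution_unique_of_mem_Icc (s := fun _ => univ) (g := fun _ => (0, 0))
    (fun t ht => (lipschitzWith_besselField lam ha ht.1.le).lipschitzOnWith)
    (⟨hau.trans_le (min_le_right _ _), (le_max_right _ _).trans_lt hbu⟩ : t₀ ∈ Ioo a b)
    hcont hY (fun _ _ => trivial) continuousOn_const
    (fun t _ => (hasDerivAt_const t ((0 : ℝ), (0 : ℝ))).congr_deriv (by ext <;> simp))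
    (fun _ _ => trivial) (by simp [h0, h1])
  exact congrArg Prod.fst
    (hsol ⟨(hau.trans_le (min_le_left _ _)).le, ((le_max_left _ _).trans_lt hbu).le⟩)

theorem hasDerivAt_mul_wronskian (hf : IsBesselSolution lam f) (hg : IsBesselSolution lam g)
    {u : ℝ} (hu : 0 < u) : HasDerivAt (fun t => t * wronskian f g t) 0 u := by
  obtain ⟨hf1, hf2, hf3⟩ := hf u hu
  obtain ⟨hg1, hg2, hg3⟩ := hg u hu
  refine ((hasDerivAt_id' u).mul ((hf1.hasDerivAt.mul hg2.hasDerivAt).sub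
    (hf2.hasDerivAt.mul hg1.hasDerivAt))).congr_deriv ?_
  have hu0 : u ≠ 0 := ne_of_gt hu
  field_simp at hf3 hg3
  simp only [Pi.sub_apply, Pi.mul_apply]
  linear_combination f u * hg3 - g u * hf3

theorem exists_eqOn_of_wronskian_ne_zero (hf : IsBesselSolution lam f)
    (hg : IsBesselSolution lam g) {t₀ : ℝ} (ht₀ : 0 < t₀) (hW : wronskian f g t₀ ≠ 0)
    (hy : IsBesselSolution lam y) :
    ∃ c₁ c₂ : ℝ, EqOn y (fun u => c₁ * f u + c₂ * g u) (Ioi 0) := by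
  set c₁ := wronskian y g t₀ / wronskian f g t₀
  set c₂ := wronskian f y t₀ / wronskian f g t₀
  obtain ⟨hf1, -, -⟩ := hf t₀ ht₀
  obtain ⟨hg1, -, -⟩ := hg t₀ ht₀
  obtain ⟨hy1, -, -⟩ := hy t₀ ht₀
  have hz := hy.const_mul_add_const_mul (hf.const_mul_add_const_mul hg c₁ c₂) 1 (-1)
  have hz_deriv : HasDerivAt (fun u => 1 * y u + -1 * (c₁ * f u + c₂ * g u))
      (1 * deriv y t₀ + -1 * (c₁ * deriv f t₀ + c₂ * deriv g t₀)) t₀ :=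
    (hy1.hasDerivAt.const_mul 1).add
      (((hf1.hasDerivAt.const_mul c₁).add (hg1.hasDerivAt.const_mul c₂)).const_mul (-1))
  have hc₁ : c₁ * wronskian f g t₀ = wronskian y g t₀ := div_mul_cancel₀ _ hW
  have hc₂ : c₂ * wronskian f g t₀ = wronskian f y t₀ := div_mul_cancel₀ _ hW
  simp only [wronskian] at hc₁ hc₂
  refine ⟨c₁, c₂, fun u hu => ?_⟩
  have := hz.eqOn_zero ht₀ ?_ ?_ hu
  · simp only [Pi.zero_apply] at this
    linear_combination this
  · refine mul_right_cancel₀ hW ?_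
    simp only [wronskian]
    linear_combination (-f t₀) * hc₁ - g t₀ * hc₂
  · refine mul_right_cancel₀ hW ?_
    simp only [hz_deriv.deriv, wronskian]
    linear_combination (-deriv f t₀) * hc₁ - deriv g t₀ * hc₂

end IsBesselSolution

theorem mul_wronskian_besselI0_besselK0 {t : ℝ} (ht : t ≠ 0) :
    t * wronskian besselI0 besselK0 t =
      -besselI0 t ^ 2 + t * wronskian besselI0 besselK0Series t := by
  simp only [wronskian]
  rw [(hasDerivAt_besselK0 ht).deriv]
  simp only [besselK0_eq_neg_log_mul_besselI0_add]
  field_simp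
  ring

theorem wronskian_besselI0_besselK0 {x : ℝ} (hx : 0 < x) :
    wronskian besselI0 besselK0 x = -x⁻¹ := by
  set h : ℝ → ℝ := fun t => -besselI0 t ^ 2 + t * wronskian besselI0 besselK0Series t
  have hcont : Continuous h := by
    have := differentiable_besselI0.continuous
    have := differentiable_deriv_besselI0.continuous
    have := differentiable_besselK0Series.continuous
    have := differentiable_deriv_besselK0Series.continuous
    simp only [h, wronskian]
    fun_prop
  have hderiv : ∀ t ∈ Ioo 0 x, HasDerivAt h 0 t := fun t ht =>
    (isBesselSolution_besselI0.hasDerivAt_mul_wronskian isBesselSolution_besselK0 ht.1)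
      |>.congr_of_eventuallyEq <| eventuallyEq_of_mem (Ioi_mem_nhds ht.1) fun s hs =>
        (mul_wronskian_besselI0_besselK0 (ne_of_gt hs)).symm
  obtain ⟨c, -, hc⟩ := exists_hasDerivAt_eq_slope h (fun _ => 0) hx hcont.continuousOn hderiv
  have h0 : h 0 = -1 := by simp [h, besselI0_zero]
  have hx0 : x ≠ 0 := ne_of_gt hx
  have hhx : h x = h 0 := by
    rw [sub_zero, eq_comm, div_eq_zero_iff, sub_eq_zero] at hc
    exact hc.resolve_right hx0
  have hxW : x * wronskian besselI0 besselK0 x = -1 :=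
    (mul_wronskian_besselI0_besselK0 hx0).trans (hhx.trans h0)
  field_simp
  linear_combination hxW

end

theorem bessel_ode_solution_neg
    (lam : ℝ) (hlam : lam < 0) (f : ℝ → ℝ)
    (hf : ∀ u ∈ Set.Ioi (0 : ℝ), DifferentiableAt ℝ f u)
    (hf' : ∀ u ∈ Set.Ioi (0 : ℝ), DifferentiableAt ℝ (deriv f) u) :
    (∀ u ∈ Set.Ioi (0 : ℝ), deriv (deriv f) u + deriv f u / u + lam * f u = 0) ↔
    (∃ c₁ c₂ : ℝ, ∀ u ∈ Set.Ioi (0 : ℝ),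
      f u = c₁ * besselI0 (Real.sqrt (-lam) * u) + c₂ * besselK0 (Real.sqrt (-lam) * u)) := by
  set k := Real.sqrt (-lam)
  have hk : 0 < k := Real.sqrt_pos.mpr (neg_pos.mpr hlam)
  have hlam_eq : k ^ 2 * (-1) = lam := by
    rw [Real.sq_sqrt (neg_nonneg.mpr hlam.le)]
    ring
  have hI : IsBesselSolution lam fun u => besselI0 (k * u) :=
    hlam_eq ▸ isBesselSolution_besselI0.comp_mul hk
  have hK : IsBesselSolution lam fun u => besselK0 (k * u) :=
    hlam_eq ▸ isBesselSolution_besselK0.comp_mul hk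
  have hW : wronskian (fun u => besselI0 (k * u)) (fun u => besselK0 (k * u)) 1 = -1 := by
    rw [wronskian_comp_mul, mul_one, wronskian_besselI0_besselK0 hk, mul_neg,
      mul_inv_cancel₀ (ne_of_gt hk)]
  constructor
  · intro hode
    exact hI.exists_eqOn_of_wronskian_ne_zero hK one_pos (by rw [hW]; norm_num)
      fun u hu => ⟨hf u hu, hf' u hu, hode u hu⟩
  · rintro ⟨c₁, c₂, hc⟩ u hu
    exact ((hI.const_mul_add_const_mul hK c₁ c₂).congr fun v hv => (hc v hv).symm) u hu |>.2.2
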